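/- arXiv:2107.02956 — 3 statements merged into one kernel-verified Lean document; each statement's English description precedes it below -/
import Mathlib

section
/- Let σ be a signature and let 𝐀 and 𝐁 be σ-structures. There exist doubly stochastic matrices X (rows indexed by B, columns by A) and Y (rows indexed by 𝒞_𝐁, columns by 𝒞_𝐀) such that X M_𝐀^ℓ = M_𝐁^ℓ Y and M_𝐀^ℓ Yᵀ = Xᵀ M_𝐁^ℓ for every label ℓ ∈ L, if and only if 𝐀 and 𝐁 have the same iterated degree sequence. -/
attribute [local instance] Classical.propDecidable

set_option maxHeartbeats 1000000

noncomputable section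

/-- A relational structure over the signature given by symbols `σ` with arities `ar`,
with universe `A`: for each relation symbol, a set of tuples. -/
structure Struct (σ : Type) (ar : σ → ℕ) (A : Type) : Type where
  rel : ∀ R : σ, Set (Fin (ar R) → A)

variable {σ : Type} {ar : σ → ℕ}

/-- The set of constraints of a structure: pairs `(R, 𝐚)` with `𝐚 ∈ R(AA)`. -/
def Cons {A : Type} (AA : Struct σ ar A) : Type :=
  Σ R : σ, {u : Fin (ar R) → A // u ∈ AA.rel R}

instance Cons.finite {A : Type} [Finite σ] [Finite A] {AA : Struct σ ar A} :
    Finite (Cons AA) :=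
  inferInstanceAs (Finite (Σ R : σ, {u : Fin (ar R) → A // u ∈ AA.rel R}))

noncomputable instance Cons.fintype {A : Type} [Fintype σ] [Fintype A] {AA : Struct σ ar A} :
    Fintype (Cons AA) := Fintype.ofFinite _

/-- Labels `(S, R)` with `R ∈ σ` and `S ⊆ [arity R]`. -/
abbrev Label (σ : Type) (ar : σ → ℕ) : Type := Σ R : σ, Finset (Fin (ar R))

/-- The entry of the matrix representation `M_AA` of a structure at `(a, R(𝐚))`:
the label `(S, R)` with `S = {i : 𝐚[i] = a}`. -/
def lab {A : Type} (AA : Struct σ ar A) (a : A) (c : Cons AA) : Label σ ar :=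
  ⟨c.1, Finset.univ.filter fun i => c.2.1 i = a⟩

/-- The 0/1 matrix `M_AA^ℓ`. -/
def labMat {A : Type} (AA : Struct σ ar A) (ℓ : Label σ ar) : Matrix A (Cons AA) ℝ :=
  fun a c => if lab AA a c = ℓ then 1 else 0

/-- A doubly stochastic matrix: non-negative entries, all rows and all columns sum to 1. -/
def IsDoublyStochastic {α β : Type} [Fintype α] [Fintype β] (X : Matrix α β ℝ) : Prop :=
  (∀ i j, 0 ≤ X i j) ∧ (∀ i, ∑ j, X i j = 1) ∧ (∀ j, ∑ i, X i j = 1)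

/-- A left stochastic matrix: non-negative entries, all columns sum to 1. -/
def IsLeftStochastic {α β : Type} [Fintype α] (X : Matrix α β ℝ) : Prop :=
  (∀ i j, 0 ≤ X i j) ∧ (∀ j, ∑ i, X i j = 1)

/-- Fractional isomorphism: doubly stochastic `X`, `Y` with
`X M_AA^ℓ = M_BB^ℓ Y` and `M_AA^ℓ Yᵀ = Xᵀ M_BB^ℓ` for every label `ℓ`. -/
def FracIso {A B : Type} [Fintype σ] [Fintype A] [Fintype B]
    (AA : Struct σ ar A) (BB : Struct σ ar B) : Prop :=
  ∃ (X : Matrix B A ℝ) (Y : Matrix (Cons BB) (Cons AA) ℝ),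
    IsDoublyStochastic X ∧ IsDoublyStochastic Y ∧
    ∀ ℓ : Label σ ar,
      X * labMat AA ℓ = labMat BB ℓ * Y ∧
      labMat AA ℓ * Y.transpose = X.transpose * labMat BB ℓ

/-- The type of iterated degrees of depth `k`. -/
def DegT (L : Type) : ℕ → Type
  | 0 => Bool
  | k + 1 => Multiset (L × DegT L k)

/-- The iterated degree `δ_k` of an element or a constraint of a structure. -/
def iterDeg {A : Type} [Fintype σ] [Fintype A] (AA : Struct σ ar A) :
    (k : ℕ) → A ⊕ Cons AA → DegT (Label σ ar) k
  | 0, x => x.isLeft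
  | k + 1, Sum.inl a =>
      (Finset.univ.val.map fun c : Cons AA => (lab AA a c, iterDeg AA k (Sum.inr c)) :
        Multiset (Label σ ar × DegT (Label σ ar) k))
  | k + 1, Sum.inr c =>
      (Finset.univ.val.map fun a : A => (lab AA a c, iterDeg AA k (Sum.inl a)) :
        Multiset (Label σ ar × DegT (Label σ ar) k))

/-- Two structures have the same iterated degree sequence. -/
def SameIterDeg {A B : Type} [Fintype σ] [Fintype A] [Fintype B]
    (AA : Struct σ ar A) (BB : Struct σ ar B) : Prop :=
  ∀ k : ℕ,
    Multiset.map (iterDeg AA k) (Finset.univ.val : Multiset (A ⊕ Cons AA)) =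
    Multiset.map (iterDeg BB k) (Finset.univ.val : Multiset (B ⊕ Cons BB))
/-- An equitable partition of a structure, given by index maps `p` (on the universe)
and `q` (on the constraints) together with its parameters `cpar`, `dpar`. -/
def IsEquitable {A : Type} (AA : Struct σ ar A) {I : Type u} {J : Type v}
    (p : A → I) (q : Cons AA → J)
    (cpar : Label σ ar → I → J → ℕ) (dpar : Label σ ar → J → I → ℕ) : Prop :=
  (∀ (a : A) (ℓ : Label σ ar) (j : J),
      Nat.card {c : Cons AA // q c = j ∧ lab AA a c = ℓ} = cpar ℓ (p a) j) ∧
  (∀ (c : Cons AA) (ℓ : Label σ ar) (i : I),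
      Nat.card {a : A // p a = i ∧ lab AA a c = ℓ} = dpar ℓ (q c) i)

/-- Two structures have a common equitable partition: equitable partitions with the same
index sets, the same parameters, and corresponding classes of equal sizes. -/
def CommonEquitable {A B : Type} (AA : Struct σ ar A) (BB : Struct σ ar B) : Prop :=
  ∃ (I J : Type) (pA : A → I) (qA : Cons AA → J) (pB : B → I) (qB : Cons BB → J)
    (cpar : Label σ ar → I → J → ℕ) (dpar : Label σ ar → J → I → ℕ),
    IsEquitable AA pA qA cpar dpar ∧ IsEquitable BB pB qB cpar dpar ∧
    (∀ i : I, Nat.card {a : A // pA a = i} = Nat.card {b : B // pB b = i}) ∧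
    (∀ j : J, Nat.card {c : Cons AA // qA c = j} = Nat.card {c : Cons BB // qB c = j})

/-- `h` is a homomorphism from `AA` to `BB`. -/
def IsHom {A B : Type} (AA : Struct σ ar A) (BB : Struct σ ar B) (h : A → B) : Prop :=
  ∀ (R : σ) (u : Fin (ar R) → A), u ∈ AA.rel R → (fun i => h (u i)) ∈ BB.rel R

/-- The number of homomorphisms from `AA` to `BB`. -/
def homCount {A B : Type} (AA : Struct σ ar A) (BB : Struct σ ar B) : ℕ :=
  Nat.card {h : A → B // IsHom AA BB h}

/-- The number of homomorphisms from `(TT, t)` to `(DD, d)` (with a designated element). -/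
def rhomCount {T D : Type} (TT : Struct σ ar T) (t : T) (DD : Struct σ ar D) (d : D) : ℕ :=
  Nat.card {h : T → D // IsHom TT DD h ∧ h t = d}

/-- The factor graph of a structure: bipartite graph on elements and constraints. -/
def factorGraph {A : Type} (AA : Struct σ ar A) : SimpleGraph (A ⊕ Cons AA) :=
  SimpleGraph.fromRel fun x y =>
    ∃ (a : A) (c : Cons AA), x = Sum.inl a ∧ y = Sum.inr c ∧ ∃ i, c.2.1 i = a

/-- A structure is an ftree if its factor graph is a tree. -/
def IsFtree {A : Type} (AA : Struct σ ar A) : Prop := (factorGraph AA).IsTree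
/-- The set `{𝐚}` of elements occurring in the tuple of a constraint, as a Finset. -/
def tsupp {A : Type} {AA : Struct σ ar A} (c : Cons AA) : Finset A :=
  Finset.univ.image c.2.1

lemma mem_tsupp {A : Type} {AA : Struct σ ar A} (c : Cons AA) (i : Fin (ar c.1)) :
    c.2.1 i ∈ tsupp c :=
  Finset.mem_image_of_mem _ (Finset.mem_univ i)

/-- Feasibility of the system `SA^k(AA, BB)`. -/
def SAfeasible {A B : Type} [Fintype B] (k : ℕ)
    (AA : Struct σ ar A) (BB : Struct σ ar B) : Prop :=
  ∃ (pV : (V : Finset A) → ({x // x ∈ V} → B) → ℝ)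
    (pC : (c : Cons AA) → ({x // x ∈ tsupp c} → B) → ℝ),
    -- all variables take values in [0,1]
    (∀ (V : Finset A) (f : {x // x ∈ V} → B),
        V.Nonempty → V.card ≤ k → 0 ≤ pV V f ∧ pV V f ≤ 1) ∧
    (∀ (c : Cons AA) (f : {x // x ∈ tsupp c} → B), 0 ≤ pC c f ∧ pC c f ≤ 1) ∧
    -- (SA1)
    (∀ V : Finset A, V.Nonempty → V.card ≤ k →
        ∑ f : {x // x ∈ V} → B, pV V f = 1) ∧
    -- (SA2)
    (∀ (U V : Finset A) (hUV : U ⊆ V), U.Nonempty → V.card ≤ k →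
        ∀ f : {x // x ∈ U} → B,
          pV U f = ∑ g : {x // x ∈ V} → B,
            if ∀ u : {x // x ∈ U}, g ⟨u.1, hUV u.2⟩ = f u then pV V g else 0) ∧
    -- (SA3)
    (∀ (c : Cons AA) (U : Finset A) (hU : U ⊆ tsupp c), U.Nonempty → U.card ≤ k →
        ∀ f : {x // x ∈ U} → B,
          pV U f = ∑ g : {x // x ∈ tsupp c} → B,
            if ∀ u : {x // x ∈ U}, g ⟨u.1, hU u.2⟩ = f u then pC c g else 0) ∧
    -- (SA4)
    (∀ (c : Cons AA) (f : {x // x ∈ tsupp c} → B),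
        (fun i => f ⟨c.2.1 i, mem_tsupp c i⟩) ∉ BB.rel c.1 → pC c f = 0)

/-- The relation symbols of the signature `σ*_k`. -/
inductive StarSym (σ : Type) (ar : σ → ℕ) (k : ℕ) : Type
  | TS (j : Fin k) (S : Finset (Fin (j.1 + 1)))
  | TI (j j' : Fin k) (iv : Fin (j'.1 + 1) → Fin (j.1 + 1))
  | RS (R : σ) (S : Finset (Fin (ar R)))
  | RI (R : σ) (j : Fin k) (iv : Fin (j.1 + 1) → Fin (ar R))

/-- Arities for `σ*_k`. -/
def starAr {k : ℕ} : StarSym σ ar k → ℕ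
  | .TS _ _ => 1
  | .TI _ _ _ => 2
  | .RS _ _ => 1
  | .RI _ _ _ => 2

/-- The universe of `AA*_k`: all tuples of length `1 ≤ j ≤ k` together with the constraints. -/
def StarUniv {A : Type} (AA : Struct σ ar A) (k : ℕ) : Type :=
  ((j : Fin k) × (Fin (j.1 + 1) → A)) ⊕ Cons AA

instance StarUniv.finite {A : Type} [Finite σ] [Finite A] {AA : Struct σ ar A} {k : ℕ} :
    Finite (StarUniv AA k) :=
  inferInstanceAs (Finite (((j : Fin k) × (Fin (j.1 + 1) → A)) ⊕ Cons AA))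

noncomputable instance StarUniv.fintype {A : Type} [Fintype σ] [Fintype A]
    {AA : Struct σ ar A} {k : ℕ} : Fintype (StarUniv AA k) := Fintype.ofFinite _

/-- The structure `AA*_k`. -/
def starStruct {A : Type} (AA : Struct σ ar A) (k : ℕ) :
    Struct (StarSym σ ar k) starAr (StarUniv AA k) where
  rel
    | .TS j S => {u | ∃ v : Fin (j.1 + 1) → A,
        (∀ i ∈ S, ∀ i' ∈ S, v i = v i') ∧ u = fun _ => Sum.inl ⟨j, v⟩}
    | .TI j j' iv => {u | ∃ v : Fin (j.1 + 1) → A,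
        u = ![Sum.inl ⟨j, v⟩, Sum.inl ⟨j', v ∘ iv⟩]}
    | .RS R S => {u | ∃ (v : Fin (ar R) → A) (hv : v ∈ AA.rel R),
        (∀ i ∈ S, ∀ i' ∈ S, v i = v i') ∧ u = fun _ => Sum.inr ⟨R, ⟨v, hv⟩⟩}
    | .RI R j iv => {u | ∃ (v : Fin (ar R) → A) (hv : v ∈ AA.rel R),
        u = ![Sum.inr ⟨R, ⟨v, hv⟩⟩, Sum.inl ⟨j, v ∘ iv⟩]}

/-- `AA ≡_k BB` : the structures `AA*_k` and `BB*_k` have a common equitable partition. -/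
def EquivK {A B : Type} (k : ℕ) (AA : Struct σ ar A) (BB : Struct σ ar B) : Prop :=
  CommonEquitable (starStruct AA k) (starStruct BB k)

/-- A bundled σ-structure with finite universe. -/
structure FinStruct (σ : Type) (ar : σ → ℕ) : Type 1 where
  carrier : Type
  [fin : Fintype carrier]
  str : Struct σ ar carrier

/-- One step in a chain: either a homomorphism exists, or the structures are
`≡_1`-equivalent (i.e. have a common equitable partition). -/
def FStep (X Y : FinStruct σ ar) : Prop :=
  (∃ h : X.carrier → Y.carrier, IsHom X.str Y.str h) ∨ CommonEquitable X.str Y.str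

/-- The structure `AA` has treewidth `< k`: there is a tree-decomposition all of whose
bags have at most `k` elements. -/
def HasTreewidthLT {A : Type} (AA : Struct σ ar A) (k : ℕ) : Prop :=
  ∃ (V : Type) (G : SimpleGraph V) (β : V → Finset A),
    G.IsTree ∧
    (∀ c : Cons AA, ∃ v : V, ∀ i, c.2.1 i ∈ β v) ∧
    (∀ (a : A) (u v : V), a ∈ β u → a ∈ β v →
      ∀ p : G.Walk u v, p.IsPath → ∀ w ∈ p.support, a ∈ β w) ∧
    (∀ v : V, (β v).card ≤ k)
/-- The adjacency matrix of a graph (a structure with one binary relation). -/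
def adjMat {A : Type} (AA : Struct Unit (fun _ => 2) A) : Matrix A A ℝ :=
  fun a a' => if ![a, a'] ∈ AA.rel () then 1 else 0

/-- A matrix is decomposable if, up to partitioning rows and columns into two
(nontrivial) blocks, it is a direct sum. -/
def MDecomposable {V W : Type} (M : Matrix V W ℝ) : Prop :=
  ∃ (SV : Set V) (SW : Set W),
    (SV.Nonempty ∨ SW.Nonempty) ∧ (SVᶜ.Nonempty ∨ SWᶜ.Nonempty) ∧
    ∀ v w, (v ∈ SV ∧ w ∉ SW) ∨ (v ∉ SV ∧ w ∈ SW) → M v w = 0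

/-- A bundled rooted ftree. -/
structure RootedFtree (σ : Type) (ar : σ → ℕ) : Type 1 where
  carrier : Type
  [fin : Fintype carrier]
  str : Struct σ ar carrier
  isFtree : IsFtree str
  root : carrier

/-- The profile of an element: the number of homomorphisms from each rooted ftree
mapping the root to it. -/
def degProfile {D : Type} (DD : Struct σ ar D) (d : D) : RootedFtree σ ar → ℕ :=
  fun F => rhomCount F.str F.root DD d

/-- The class of a constraint: its relation symbol, its equality pattern, and the
`degProfile`-classes of its coordinates. -/
def qProfile {D : Type} (DD : Struct σ ar D) (c : Cons DD) :
    Σ R : σ, Set (Fin (ar R) × Fin (ar R)) × (Fin (ar R) → (RootedFtree σ ar → ℕ)) :=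
  ⟨c.1, ({p | c.2.1 p.1 = c.2.1 p.2}, fun s => degProfile DD (c.2.1 s))⟩

/-- Number of homomorphisms with a designated element and a designated constraint. -/
def rhomCount2 {T D : Type} (TT : Struct σ ar T) (t : T) (c : Cons TT)
    (DD : Struct σ ar D) (d : D) (c' : Cons DD) : ℕ :=
  Nat.card {h : T → D // IsHom TT DD h ∧ h t = d ∧
    (⟨c.1, fun i => h (c.2.1 i)⟩ : Σ R : σ, Fin (ar R) → D) = ⟨c'.1, c'.2.1⟩}

/-- `(t, R(𝐭))` can be mapped to `(d, R'(𝐝))`. -/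
def CanMap {T D : Type} {TT : Struct σ ar T} {DD : Struct σ ar D}
    (t : T) (c : Cons TT) (d : D) (c' : Cons DD) : Prop :=
  ∃ hR : c.1 = c'.1,
    (∀ s s' : Fin (ar c.1), c.2.1 s = c.2.1 s' →
        c'.2.1 (Fin.cast (congrArg ar hR) s) = c'.2.1 (Fin.cast (congrArg ar hR) s')) ∧
    (∀ s : Fin (ar c.1), c.2.1 s = t → c'.2.1 (Fin.cast (congrArg ar hR) s) = d)

/-- A substructure of a structure: a subset of the universe together with a subset of
the tuples of each relation, lying inside the subset. -/
structure Substr {A : Type} (AA : Struct σ ar A) : Type where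
  carrier : Set A
  srel : ∀ R : σ, Set (Fin (ar R) → A)
  srel_sub : ∀ R : σ, srel R ⊆ AA.rel R
  srel_mem : ∀ R : σ, ∀ u ∈ srel R, ∀ i, u i ∈ carrier

/-- The substructure as a structure in its own right. -/
def Substr.toStruct {A : Type} {AA : Struct σ ar A} (Q : Substr AA) :
    Struct σ ar {x // x ∈ Q.carrier} where
  rel R := {u | (fun i => (u i).1) ∈ Q.srel R}

/-- Containment of substructures. -/
def Substr.le {A : Type} {AA : Struct σ ar A} (Q Q' : Substr AA) : Prop :=
  Q.carrier ⊆ Q'.carrier ∧ ∀ R : σ, Q.srel R ⊆ Q'.srel R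

/-- A subftree of `TT` avoiding the constraint `c`, containing a unique element of the
tuple of `c`, which moreover participates in exactly one constraint of the subftree. -/
def GoodPiece {T : Type} (TT : Struct σ ar T) (c : Cons TT) (Q : Substr TT) : Prop :=
  IsFtree Q.toStruct ∧
  c.2.1 ∉ Q.srel c.1 ∧
  ∃ x ∈ Q.carrier, (∃ i, c.2.1 i = x) ∧
    (∀ y ∈ Q.carrier, (∃ i, c.2.1 i = y) → y = x) ∧
    (∃! e : Σ R : σ, {u // u ∈ Q.srel R}, ∃ i, e.2.1 i = x)

/-- The collection `TT \ c` of maximal subftrees as above. -/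
def TreeMinus {T : Type} (TT : Struct σ ar T) (c : Cons TT) : Set (Substr TT) :=
  {Q | GoodPiece TT c Q ∧ ∀ Q' : Substr TT, GoodPiece TT c Q' → Q.le Q' → Q'.le Q}

/-- The disjoint union of two structures. -/
def dUnion {A B : Type} (AA : Struct σ ar A) (BB : Struct σ ar B) :
    Struct σ ar (A ⊕ B) where
  rel R := {u | (∃ v ∈ AA.rel R, u = fun i => Sum.inl (v i)) ∨
                (∃ v ∈ BB.rel R, u = fun i => Sum.inr (v i))}

/-- Embedding of constraints of `AA` into constraints of the disjoint union. -/
def consInl {A B : Type} (AA : Struct σ ar A) (BB : Struct σ ar B) (c : Cons AA) :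
    Cons (dUnion AA BB) :=
  ⟨c.1, ⟨fun i => Sum.inl (c.2.1 i), Or.inl ⟨c.2.1, c.2.2, rfl⟩⟩⟩

/-- Embedding of constraints of `BB` into constraints of the disjoint union. -/
def consInr {A B : Type} (AA : Struct σ ar A) (BB : Struct σ ar B) (c : Cons BB) :
    Cons (dUnion AA BB) :=
  ⟨c.1, ⟨fun i => Sum.inr (c.2.1 i), Or.inr ⟨c.2.1, c.2.2, rfl⟩⟩⟩

/-- The stable-degree class of an element of the disjoint union: its full iterated
degree sequence. -/
def degPclass {A B : Type} [Fintype σ] [Fintype A] [Fintype B]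
    (AA : Struct σ ar A) (BB : Struct σ ar B) (x : A ⊕ B) :
    (k : ℕ) → DegT (Label σ ar) k :=
  fun k => iterDeg (dUnion AA BB) k (Sum.inl x)

/-- The stable-degree class of a constraint of the disjoint union. -/
def degQclass {A B : Type} [Fintype σ] [Fintype A] [Fintype B]
    (AA : Struct σ ar A) (BB : Struct σ ar B) (c : Cons (dUnion AA BB)) :
    (k : ℕ) → DegT (Label σ ar) k :=
  fun k => iterDeg (dUnion AA BB) k (Sum.inr c)
/-- The set `Y`: tuples in `(B × [m])^m` with no repeated entries, in which the copy
index of each entry is bounded by the number of occurrences of its `B`-component. -/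
def Ytype (B : Type) (m : ℕ) : Type :=
  {y : Fin m → B × Fin m // Function.Injective y ∧
    ∀ i, ((y i).2 : ℕ) + 1 ≤ Nat.card {j : Fin m // (y j).1 = (y i).1}}

/-- Permuting the coordinates of an element of `Y`. -/
def permY {B : Type} {m : ℕ} (τ : Equiv.Perm (Fin m)) (y : Ytype B m) : Ytype B m :=
  ⟨fun i => y.1 (τ i), y.2.1.comp τ.injective, fun i => by
    have h := y.2.2 (τ i)
    have hc : Nat.card {j : Fin m // (y.1 (τ j)).1 = (y.1 (τ i)).1}
        = Nat.card {j : Fin m // (y.1 j).1 = (y.1 (τ i)).1} :=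
      Nat.card_congr (τ.subtypeEquiv fun j => Iff.rfl)
    exact le_trans h (le_of_eq hc.symm)⟩

/-- The structure `X₁` from the proof of Theorem `thm:SA1`, built from a choice
function `choice` selecting a canonical element of `Y` for each multiset. -/
def X1struct {A B : Type} (AA : Struct σ ar A) (BB : Struct σ ar B) (m : ℕ)
    (choice : (Fin m → B) → Ytype B m) : Struct σ ar (A × Ytype B m) where
  rel R := {u | ∃ a : Fin (ar R) → A, a ∈ AA.rel R ∧
    ∃ tt : Fin m → Fin (ar R) → B,
      (∀ i, tt i ∈ BB.rel R) ∧
      (∀ i s s', a s = a s' → tt i s = tt i s') ∧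
      ∃ τ : Equiv.Perm (Fin m),
        u = fun s => (a s, permY τ (choice fun i => tt i s))}


/-!
If `X`, `Y` is a fractional isomorphism, then `X b a ≠ 0` forces `δ_k(a) = δ_k(b)` and
`Y d c ≠ 0` forces `δ_k(c) = δ_k(d)`, by induction on `k`: the intertwining equations make `X`
and `Xᵀ` exchange the vectors that count the neighbours of a given label and degree, and a doubly
stochastic matrix can only exchange two vectors that agree across each of its nonzero entries.
Summing a doubly stochastic matrix against the indicator of a degree then matches class sizes.

Conversely, the colourings `δ_k` refine each other, so on the disjoint union of the two finite
structures they become stable at some level `k`. The stable colouring is a common equitable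
partition, and spreading mass uniformly over its classes gives doubly stochastic `X` and `Y`;
the intertwining equations then reduce to double counting the edges between two classes.
-/

open Finset Matrix

section Multisets

variable {α β α' β' T : Type} [Fintype α] [Fintype β] [Fintype α'] [Fintype β']

theorem count_map_univ [DecidableEq T] (f : α → T) (t : T) :
    (Multiset.map f univ.val).count t = Nat.card {x // f x = t} := by
  rw [Multiset.count_map, Nat.card_eq_fintype_card, Fintype.card_subtype]
  simp only [eq_comm]
  rfl

theorem map_univ_sum (f : α ⊕ β → T) :
    Multiset.map f (univ : Finset (α ⊕ β)).val
      = Multiset.map (fun a => f (Sum.inl a)) univ.val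
        + Multiset.map (fun b => f (Sum.inr b)) univ.val := by
  rw [← univ_disjSum_univ, val_disjSum, Multiset.map_disjSum]

theorem map_univ_sum_eq_iff_of_isLeft {f : α ⊕ β → T} {g : α' ⊕ β' → T} (s : T → Bool)
    (hf : ∀ x, s (f x) = x.isLeft) (hg : ∀ y, s (g y) = y.isLeft) :
    Multiset.map f univ.val = Multiset.map g univ.val ↔
      Multiset.map (fun a => f (Sum.inl a)) univ.val
          = Multiset.map (fun a => g (Sum.inl a)) univ.val ∧
        Multiset.map (fun b => f (Sum.inr b)) univ.val
          = Multiset.map (fun b => g (Sum.inr b)) univ.val := by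
  rw [map_univ_sum, map_univ_sum]
  refine ⟨fun h => ⟨?_, ?_⟩, fun h => by rw [h.1, h.2]⟩
  · simpa [Multiset.filter_map, Function.comp_def, hf, hg] using
      congrArg (Multiset.filter fun t => s t = true) h
  · simpa [Multiset.filter_map, Function.comp_def, hf, hg] using
      congrArg (Multiset.filter fun t => s t = false) h

end Multisets

theorem Multiset.map_eq_map_of_imp {α β T T' : Type} {s : Multiset α} {t : Multiset β}
    {f : α → T} {g : β → T} {f' : α → T'} {g' : β → T'} (h : s.map f = t.map g)
    (himp : ∀ a b, f a = g b → f' a = g' b) : s.map f' = t.map g' := by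
  rw [← Multiset.rel_eq, Multiset.rel_map] at h ⊢
  exact h.mono fun a _ b _ => himp a b

section DoublyStochastic

variable {α β γ δ T : Type} [Fintype α]

theorem mulVec_indicator_of_support {Y : Matrix β α ℝ} (hrow : ∀ b, ∑ a, Y b a = 1)
    {f : α → T} {g : β → T} (hsupp : ∀ b a, Y b a ≠ 0 → f a = g b) (t : T) :
    (Y *ᵥ fun a => if f a = t then 1 else 0) = fun b => if g b = t then 1 else 0 := by
  ext b
  simp only [mulVec, dotProduct]
  rw [← one_mul (ite _ _ _), ← hrow b, Finset.sum_mul]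
  refine Finset.sum_congr rfl fun a _ => ?_
  by_cases hba : Y b a = 0
  · simp [hba]
  · rw [hsupp b a hba]

variable [Fintype β]

theorem IsDoublyStochastic.transpose {X : Matrix β α ℝ} (hX : IsDoublyStochastic X) :
    IsDoublyStochastic Xᵀ :=
  ⟨fun a b => hX.1 b a, hX.2.2, hX.2.1⟩

theorem IsDoublyStochastic.dotProduct_one_mulVec {X : Matrix β α ℝ}
    (hX : IsDoublyStochastic X) (u : α → ℝ) : 1 ⬝ᵥ (X *ᵥ u) = 1 ⬝ᵥ u := by
  rw [dotProduct_mulVec]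
  congr 1
  ext a
  simp [vecMul, dotProduct, hX.2.2 a]

theorem IsDoublyStochastic.apply_eq_of_mulVec_eq {X : Matrix β α ℝ}
    (hX : IsDoublyStochastic X) {u : α → ℝ} {v : β → ℝ} (hu : X *ᵥ u = v) (hv : Xᵀ *ᵥ v = u)
    {b : β} {a : α} (hba : X b a ≠ 0) : u a = v b := by
  have hnorm : u ⬝ᵥ u = v ⬝ᵥ v :=
    calc u ⬝ᵥ u = (Xᵀ *ᵥ v) ⬝ᵥ u := by rw [hv]
      _ = v ⬝ᵥ (X *ᵥ u) := by rw [mulVec_transpose, ← dotProduct_mulVec]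
      _ = v ⬝ᵥ v := by rw [hu]
  have hzero : ∑ b, ∑ a, X b a * (u a - v b) ^ 2 = 0 :=
    calc ∑ b, ∑ a, X b a * (u a - v b) ^ 2
        = ∑ b, ∑ a, X b a * u a ^ 2 - 2 * ∑ b, v b * (X *ᵥ u) b
            + ∑ b, v b ^ 2 * ∑ a, X b a := by
          simp only [mulVec, dotProduct, Finset.mul_sum, ← Finset.sum_sub_distrib,
            ← Finset.sum_add_distrib]
          refine Finset.sum_congr rfl fun b _ => Finset.sum_congr rfl fun a _ => ?_
          ring
      _ = u ⬝ᵥ u - 2 * (v ⬝ᵥ v) + v ⬝ᵥ v := by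
          rw [Finset.sum_comm, hu]
          simp only [← Finset.sum_mul, hX.2.2, hX.2.1, dotProduct, sq, one_mul, mul_one]
      _ = 0 := by rw [hnorm]; ring
  have hnonneg (b : β) (a : α) : 0 ≤ X b a * (u a - v b) ^ 2 :=
    mul_nonneg (hX.1 b a) (sq_nonneg _)
  have hterm : X b a * (u a - v b) ^ 2 = 0 :=
    (sum_eq_zero_iff_of_nonneg fun a _ => hnonneg b a).1
      ((sum_eq_zero_iff_of_nonneg fun b _ => sum_nonneg fun a _ => hnonneg b a).1 hzero b
        (mem_univ b)) a (mem_univ a)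
  exact sub_eq_zero.1 (pow_eq_zero_iff two_ne_zero |>.1 ((mul_eq_zero.1 hterm).resolve_left hba))

theorem IsDoublyStochastic.map_univ_eq {X : Matrix β α ℝ} (hX : IsDoublyStochastic X)
    {f : α → T} {g : β → T} (hsupp : ∀ b a, X b a ≠ 0 → f a = g b) :
    Multiset.map f univ.val = Multiset.map g univ.val := by
  ext t
  have h : (1 : β → ℝ) ⬝ᵥ (fun b => if g b = t then 1 else 0)
      = 1 ⬝ᵥ (fun a => if f a = t then 1 else 0) := by
    rw [← mulVec_indicator_of_support hX.2.1 hsupp t, hX.dotProduct_one_mulVec]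
  simp only [one_dotProduct, Finset.sum_boole] at h
  rw [count_map_univ, count_map_univ, Nat.card_eq_fintype_card, Nat.card_eq_fintype_card,
    Fintype.card_subtype, Fintype.card_subtype]
  exact_mod_cast h.symm

theorem IsDoublyStochastic.mulVec_apply_eq_of_intertwine [Fintype γ] [Fintype δ]
    {X : Matrix β α ℝ} {Y : Matrix δ γ ℝ} {M : Matrix α γ ℝ} {N : Matrix β δ ℝ}
    (hX : IsDoublyStochastic X) (h₁ : X * M = N * Y) (h₂ : M * Yᵀ = Xᵀ * N)
    {u : γ → ℝ} {v : δ → ℝ} (hu : Y *ᵥ u = v) (hv : Yᵀ *ᵥ v = u) {b : β} {a : α}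
    (hba : X b a ≠ 0) : (M *ᵥ u) a = (N *ᵥ v) b :=
  hX.apply_eq_of_mulVec_eq (by rw [mulVec_mulVec, h₁, ← mulVec_mulVec, hu])
    (by rw [mulVec_mulVec, ← h₂, ← mulVec_mulVec, hv]) hba

end DoublyStochastic

section PartitionAverage

variable {α β γ I : Type}

theorem card_fiber_ne_zero [Finite α] (p : α → I) (a : α) : Nat.card {x // p x = p a} ≠ 0 :=
  Nat.card_ne_zero.2 ⟨⟨⟨a, rfl⟩⟩, inferInstance⟩

def partitionAvg (p : α → I) (p' : β → I) : Matrix β α ℝ :=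
  fun b a => if p a = p' b then (Nat.card {x // p x = p' b} : ℝ)⁻¹ else 0

variable {p : α → I} {p' : β → I}

theorem isDoublyStochastic_partitionAvg [Fintype α] [Fintype β]
    (hcard : ∀ i, Nat.card {a // p a = i} = Nat.card {b // p' b = i}) :
    IsDoublyStochastic (partitionAvg p p') := by
  refine ⟨fun b a => by unfold partitionAvg; split_ifs <;> positivity, fun b => ?_, fun a => ?_⟩
  · simp only [partitionAvg, Finset.sum_ite, Finset.sum_const_zero, add_zero, Finset.sum_const,
      nsmul_eq_mul]
    rw [← Fintype.card_subtype, ← Nat.card_eq_fintype_card, hcard]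
    exact mul_inv_cancel₀ (Nat.cast_ne_zero.2 (card_fiber_ne_zero p' b))
  · have hcol (b : β) : partitionAvg p p' b a
        = if p' b = p a then (Nat.card {x // p x = p a} : ℝ)⁻¹ else 0 := by
      unfold partitionAvg
      split_ifs <;> simp_all
    simp only [hcol, Finset.sum_ite, Finset.sum_const_zero, add_zero, Finset.sum_const,
      nsmul_eq_mul]
    rw [← Fintype.card_subtype, ← Nat.card_eq_fintype_card, ← hcard]
    exact mul_inv_cancel₀ (Nat.cast_ne_zero.2 (card_fiber_ne_zero p a))

theorem partitionAvg_mul_apply [Fintype α] (M : Matrix α γ ℝ) (b : β) (c : γ) :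
    (partitionAvg p p' * M) b c
      = (Mᵀ *ᵥ fun a => if p a = p' b then 1 else 0) c / Nat.card {x // p x = p' b} := by
  simp only [partitionAvg, mul_apply, mulVec, dotProduct, transpose_apply, Finset.sum_div]
  refine Finset.sum_congr rfl fun a _ => ?_
  split_ifs <;> simp [div_eq_inv_mul, mul_comm]

theorem partitionAvg_transpose_mul_apply [Fintype β] (M : Matrix β γ ℝ) (a : α) (c : γ) :
    ((partitionAvg p p')ᵀ * M) a c
      = (Mᵀ *ᵥ fun b => if p' b = p a then 1 else 0) c / Nat.card {x // p x = p a} := by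
  simp only [partitionAvg, mul_apply, mulVec, dotProduct, transpose_apply, Finset.sum_div]
  refine Finset.sum_congr rfl fun b _ => ?_
  split_ifs <;> simp_all [div_eq_inv_mul, mul_comm]

theorem mul_partitionAvg_apply [Fintype β] (M : Matrix γ β ℝ) (c : γ) (a : α) :
    (M * partitionAvg p p') c a
      = (M *ᵥ fun b => if p' b = p a then 1 else 0) c / Nat.card {x // p x = p a} := by
  simp only [partitionAvg, mul_apply, mulVec, dotProduct, Finset.sum_div]
  refine Finset.sum_congr rfl fun b _ => ?_
  split_ifs <;> simp_all [div_eq_mul_inv]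

theorem mul_partitionAvg_transpose_apply [Fintype α] (M : Matrix γ α ℝ) (c : γ) (b : β) :
    (M * (partitionAvg p p')ᵀ) c b
      = (M *ᵥ fun a => if p a = p' b then 1 else 0) c / Nat.card {x // p x = p' b} := by
  simp only [partitionAvg, mul_apply, mulVec, dotProduct, transpose_apply, Finset.sum_div]
  refine Finset.sum_congr rfl fun a _ => ?_
  split_ifs <;> simp [div_eq_mul_inv]

end PartitionAverage

section Stabilization

variable {E α β T : Type} [Fintype E] [DecidableEq α] [DecidableEq β]

theorem Function.FactorsThrough.image_univ_eq {f : E → α} {g : E → β} (h : g.FactorsThrough f)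
    (e' : α → β) : univ.image g = (univ.image f).image (Function.extend f g e') := by
  rw [image_image]
  exact image_congr fun x _ => (h.extend_apply e' x).symm

theorem Function.FactorsThrough.card_image_univ_le {f : E → α} {g : E → β}
    (h : g.FactorsThrough f) : #(univ.image g) ≤ #(univ.image f) := by
  rcases isEmpty_or_nonempty E with hE | ⟨⟨x⟩⟩
  · simp [univ_eq_empty]
  · rw [h.image_univ_eq fun _ => g x]
    exact card_image_le

theorem Function.FactorsThrough.symm_of_card_image_univ_le {f : E → α} {g : E → β}
    (h : g.FactorsThrough f) (hcard : #(univ.image f) ≤ #(univ.image g)) :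
    f.FactorsThrough g := by
  intro x y hxy
  have himg := h.image_univ_eq fun _ => g x
  have hinj : Set.InjOn (Function.extend f g fun _ => g x) (univ.image f) :=
    card_image_iff.1 (le_antisymm card_image_le (himg ▸ hcard))
  refine hinj (mem_image_of_mem f (mem_univ x)) (mem_image_of_mem f (mem_univ y)) ?_
  rw [h.extend_apply, h.extend_apply, hxy]

theorem exists_factorsThrough_succ {T : ℕ → Type} (δ : (k : ℕ) → E → T k)
    (hrefine : ∀ k, (δ k).FactorsThrough (δ (k + 1))) :
    ∃ k, (δ (k + 1)).FactorsThrough (δ k) := by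
  by_contra! hne
  have hmono : StrictMono fun k => #(univ.image (δ k)) :=
    strictMono_nat_of_lt_succ fun k => lt_of_le_of_ne (hrefine k).card_image_univ_le
      fun heq => hne k ((hrefine k).symm_of_card_image_univ_le heq.ge)
  have hbound : #(univ.image (δ (Fintype.card E + 1))) ≤ Fintype.card E :=
    card_image_le.trans_eq card_univ
  have := hmono.id_le (Fintype.card E + 1)
  simp only [id] at this
  omega

end Stabilization

section Structures

variable {A : Type} [Fintype A] (AA : Struct σ ar A)

theorem labMat_transpose_mulVec_indicator {T : Type} (ℓ : Label σ ar) (f : A → T) (t : T)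
    (c : Cons AA) :
    ((labMat AA ℓ)ᵀ *ᵥ fun a => if f a = t then 1 else 0) c
      = Nat.card {a : A // f a = t ∧ lab AA a c = ℓ} := by
  simp only [mulVec, dotProduct, transpose_apply, labMat, ite_zero_mul_ite_zero, one_mul,
    Finset.sum_boole, Nat.card_eq_fintype_card, Fintype.card_subtype, and_comm]

variable [Fintype σ]

theorem labMat_mulVec_indicator {T : Type} (ℓ : Label σ ar) (g : Cons AA → T) (t : T) (a : A) :
    (labMat AA ℓ *ᵥ fun c => if g c = t then 1 else 0) a
      = Nat.card {c : Cons AA // g c = t ∧ lab AA a c = ℓ} := by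
  simp only [mulVec, dotProduct, labMat, ite_zero_mul_ite_zero, one_mul, Finset.sum_boole,
    Nat.card_eq_fintype_card, Fintype.card_subtype, and_comm]

theorem count_iterDeg_succ_inl (k : ℕ) (a : A) (ℓ : Label σ ar) (t : DegT (Label σ ar) k) :
    Multiset.count (ℓ, t) (iterDeg AA (k + 1) (Sum.inl a) : Multiset (Label σ ar × DegT _ k))
      = Nat.card {c : Cons AA // iterDeg AA k (Sum.inr c) = t ∧ lab AA a c = ℓ} := by
  rw [iterDeg, count_map_univ]
  exact Nat.card_congr (Equiv.subtypeEquivRight fun c => by rw [Prod.ext_iff, and_comm])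

theorem count_iterDeg_succ_inr (k : ℕ) (c : Cons AA) (ℓ : Label σ ar) (t : DegT (Label σ ar) k) :
    Multiset.count (ℓ, t) (iterDeg AA (k + 1) (Sum.inr c) : Multiset (Label σ ar × DegT _ k))
      = Nat.card {a : A // iterDeg AA k (Sum.inl a) = t ∧ lab AA a c = ℓ} := by
  rw [iterDeg, count_map_univ]
  exact Nat.card_congr (Equiv.subtypeEquivRight fun a => by rw [Prod.ext_iff, and_comm])

end Structures

section FracIsoToIterDeg

variable [Fintype σ] {A B : Type} [Fintype A] [Fintype B] {AA : Struct σ ar A}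
  {BB : Struct σ ar B}

theorem iterDeg_eq_of_fracIso_ne_zero {X : Matrix B A ℝ} {Y : Matrix (Cons BB) (Cons AA) ℝ}
    (hX : IsDoublyStochastic X) (hY : IsDoublyStochastic Y)
    (hint : ∀ ℓ : Label σ ar, X * labMat AA ℓ = labMat BB ℓ * Y ∧
      labMat AA ℓ * Yᵀ = Xᵀ * labMat BB ℓ) (k : ℕ) :
    (∀ b a, X b a ≠ 0 → iterDeg AA k (Sum.inl a) = iterDeg BB k (Sum.inl b)) ∧
    (∀ d c, Y d c ≠ 0 → iterDeg AA k (Sum.inr c) = iterDeg BB k (Sum.inr d)) := by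
  induction k with
  | zero => exact ⟨fun _ _ _ => rfl, fun _ _ _ => rfl⟩
  | succ k ih =>
    obtain ⟨ihX, ihY⟩ := ih
    refine ⟨fun b a hba => Multiset.ext.2 fun ⟨ℓ, t⟩ => ?_,
      fun d c hdc => Multiset.ext.2 fun ⟨ℓ, t⟩ => ?_⟩
    · rw [count_iterDeg_succ_inl, count_iterDeg_succ_inl]
      have := hX.mulVec_apply_eq_of_intertwine (hint ℓ).1 (hint ℓ).2
        (mulVec_indicator_of_support hY.2.1 ihY t)
        (mulVec_indicator_of_support hY.transpose.2.1 (fun c d h => (ihY d c h).symm) t) hba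
      rw [labMat_mulVec_indicator, labMat_mulVec_indicator] at this
      exact_mod_cast this
    · rw [count_iterDeg_succ_inr, count_iterDeg_succ_inr]
      have := hY.mulVec_apply_eq_of_intertwine (M := (labMat AA ℓ)ᵀ) (N := (labMat BB ℓ)ᵀ)
        (by simpa only [transpose_mul, transpose_transpose] using congrArg transpose (hint ℓ).2)
        (by simpa only [transpose_mul] using congrArg transpose (hint ℓ).1)
        (mulVec_indicator_of_support hX.2.1 ihX t)
        (mulVec_indicator_of_support hX.transpose.2.1 (fun a b h => (ihX b a h).symm) t) hdc
      rw [labMat_transpose_mulVec_indicator, labMat_transpose_mulVec_indicator] at this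
      exact_mod_cast this

theorem sameIterDeg_of_fracIso (h : FracIso AA BB) : SameIterDeg AA BB := by
  obtain ⟨X, Y, hX, hY, hint⟩ := h
  intro k
  have hdeg := iterDeg_eq_of_fracIso_ne_zero hX hY hint k
  rw [map_univ_sum, map_univ_sum, hX.map_univ_eq hdeg.1, hY.map_univ_eq hdeg.2]

end FracIsoToIterDeg

section EquitableToFracIso

variable [Fintype σ] {A B : Type} [Fintype A] [Fintype B]

theorem IsEquitable.div_eq_div {AA : Struct σ ar A} {I J : Type} {p : A → I} {q : Cons AA → J}
    {cpar : Label σ ar → I → J → ℕ} {dpar : Label σ ar → J → I → ℕ}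
    (h : IsEquitable AA p q cpar dpar) (ℓ : Label σ ar) {i : I} {j : J}
    (hi : Nat.card {a // p a = i} ≠ 0) (hj : Nat.card {c // q c = j} ≠ 0) :
    (dpar ℓ j i : ℝ) / Nat.card {a // p a = i} = cpar ℓ i j / Nat.card {c // q c = j} := by
  have hcount : Nat.card {a // p a = i} * cpar ℓ i j = Nat.card {c // q c = j} * dpar ℓ j i := by
    simp only [Nat.card_eq_fintype_card, Fintype.card_subtype]
    refine card_mul_eq_card_mul (fun a c => lab AA a c = ℓ) (fun a ha => ?_) (fun c hc => ?_)
    · rw [mem_filter] at ha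
      rw [← ha.2, ← h.1 a ℓ j, Nat.card_eq_fintype_card, Fintype.card_subtype, bipartiteAbove,
        filter_filter]
    · rw [mem_filter] at hc
      rw [← hc.2, ← h.2 c ℓ i, Nat.card_eq_fintype_card, Fintype.card_subtype, bipartiteBelow,
        filter_filter]
  rw [div_eq_div_iff (Nat.cast_ne_zero.2 hi) (Nat.cast_ne_zero.2 hj)]
  norm_cast
  linarith

theorem fracIso_of_commonEquitable {AA : Struct σ ar A} {BB : Struct σ ar B}
    (h : CommonEquitable AA BB) : FracIso AA BB := by
  obtain ⟨I, J, pA, qA, pB, qB, cpar, dpar, hA, hB, hI, hJ⟩ := h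
  refine ⟨partitionAvg pA pB, partitionAvg qA qB, isDoublyStochastic_partitionAvg hI,
    isDoublyStochastic_partitionAvg hJ, fun ℓ => ⟨?_, ?_⟩⟩
  · ext b c
    rw [partitionAvg_mul_apply, mul_partitionAvg_apply, labMat_transpose_mulVec_indicator,
      labMat_mulVec_indicator, hA.2 c ℓ, hB.1 b ℓ]
    exact hA.div_eq_div ℓ (hI (pB b) ▸ card_fiber_ne_zero pB b) (card_fiber_ne_zero qA c)
  · ext a d
    rw [mul_partitionAvg_transpose_apply, partitionAvg_transpose_mul_apply,
      labMat_mulVec_indicator, labMat_transpose_mulVec_indicator, hA.1 a ℓ, hB.2 d ℓ,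
      hI (pA a), hJ (qB d)]
    exact (hB.div_eq_div ℓ (hI (pA a) ▸ card_fiber_ne_zero pA a) (card_fiber_ne_zero qB d)).symm

end EquitableToFracIso

section IterDegToEquitable

variable [Fintype σ] {A B : Type} [Fintype A] [Fintype B] {AA : Struct σ ar A}
  {BB : Struct σ ar B}

theorem card_eq_of_sameIterDeg (h : SameIterDeg AA BB) : Fintype.card A = Fintype.card B := by
  have hA := congrArg Multiset.card ((map_univ_sum_eq_iff_of_isLeft (f := iterDeg AA 0)
    (g := iterDeg BB 0) (fun v => (v : Bool)) (fun _ => rfl) (fun _ => rfl)).1 (h 0)).1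
  rwa [Multiset.card_map, Multiset.card_map] at hA

/-- An element and a constraint share `δ₁` only if neither has a neighbour, which the equal
cardinalities exclude. -/
theorem iterDeg_eq_of_iterDeg_succ_eq (hA : Fintype.card A = Fintype.card B) (k : ℕ)
    (x : A ⊕ Cons AA) (y : B ⊕ Cons BB) (h : iterDeg AA (k + 1) x = iterDeg BB (k + 1) y) :
    iterDeg AA k x = iterDeg BB k y := by
  induction k generalizing x y with
  | zero =>
    rcases x with a | c <;> rcases y with b | d <;> rw [iterDeg, iterDeg] at h
    · rfl
    · obtain ⟨b₀⟩ : Nonempty B := Fintype.card_pos_iff.1 (hA ▸ Fintype.card_pos_iff.2 ⟨a⟩)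
      obtain ⟨c, -, hc⟩ := Multiset.mem_map.1 (h ▸ Multiset.mem_map_of_mem _ (mem_univ_val b₀))
      exact absurd (Prod.ext_iff.1 hc).2 Bool.false_ne_true
    · obtain ⟨a₀⟩ : Nonempty A := Fintype.card_pos_iff.1 (hA ▸ Fintype.card_pos_iff.2 ⟨b⟩)
      obtain ⟨d, -, hd⟩ := Multiset.mem_map.1 (h ▸ Multiset.mem_map_of_mem _ (mem_univ_val a₀))
      exact absurd (Prod.ext_iff.1 hd).2 Bool.false_ne_true
    · rfl
  | succ k ih =>
    rcases x with a | c <;> rcases y with b | d <;>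
      exact Multiset.map_eq_map_of_imp h fun _ _ e =>
        Prod.ext (Prod.ext_iff.1 e).1 (ih _ _ (Prod.ext_iff.1 e).2)

variable (AA BB) in
def unionDeg (k : ℕ) : (A ⊕ Cons AA) ⊕ (B ⊕ Cons BB) → DegT (Label σ ar) k :=
  Sum.elim (iterDeg AA k) (iterDeg BB k)

theorem unionDeg_factorsThrough_succ (hA : Fintype.card A = Fintype.card B) (k : ℕ) :
    (unionDeg AA BB k).FactorsThrough (unionDeg AA BB (k + 1)) := by
  rintro (x | y) (x' | y') hxy
  · exact iterDeg_eq_of_iterDeg_succ_eq rfl k x x' hxy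
  · exact iterDeg_eq_of_iterDeg_succ_eq hA k x y' hxy
  · exact (iterDeg_eq_of_iterDeg_succ_eq hA k x' y hxy.symm).symm
  · exact iterDeg_eq_of_iterDeg_succ_eq rfl k y y' hxy

theorem unionDeg_zero_factorsThrough (hA : Fintype.card A = Fintype.card B) (k : ℕ) :
    (unionDeg AA BB 0).FactorsThrough (unionDeg AA BB k) := by
  induction k with
  | zero => exact fun _ _ => id
  | succ k ih => exact fun x y hxy => ih (unionDeg_factorsThrough_succ hA k hxy)

theorem isEquitable_iterDeg (AA : Struct σ ar A) (k : ℕ)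
    (up : DegT (Label σ ar) k → Multiset (Label σ ar × DegT (Label σ ar) k))
    (hup : ∀ x, up (iterDeg AA k x) = iterDeg AA (k + 1) x) :
    IsEquitable AA (fun a => iterDeg AA k (Sum.inl a)) (fun c => iterDeg AA k (Sum.inr c))
      (fun ℓ i j => (up i).count (ℓ, j)) (fun ℓ j i => (up j).count (ℓ, i)) :=
  ⟨fun a ℓ j => by dsimp only; rw [hup, count_iterDeg_succ_inl],
    fun c ℓ i => by dsimp only; rw [hup, count_iterDeg_succ_inr]⟩

theorem commonEquitable_of_sameIterDeg (h : SameIterDeg AA BB) : CommonEquitable AA BB := by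
  have hA := card_eq_of_sameIterDeg h
  obtain ⟨k, hstab⟩ :=
    exists_factorsThrough_succ (unionDeg AA BB) (unionDeg_factorsThrough_succ hA)
  have hside : (unionDeg AA BB 0).FactorsThrough (unionDeg AA BB k) :=
    unionDeg_zero_factorsThrough hA k
  obtain ⟨hsepA, hsepC⟩ := (map_univ_sum_eq_iff_of_isLeft (f := iterDeg AA k)
    (g := iterDeg BB k) (Function.extend (unionDeg AA BB k) (unionDeg AA BB 0) fun _ => true)
    (fun x => hside.extend_apply _ (Sum.inl x)) (fun y => hside.extend_apply _ (Sum.inr y))).1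
    (h k)
  -- At the stable level `unionDeg (k + 1)` is a function of `unionDeg k`: the parameters.
  let up : DegT (Label σ ar) k → Multiset (Label σ ar × DegT (Label σ ar) k) :=
    Function.extend (unionDeg AA BB k) (unionDeg AA BB (k + 1)) 0
  refine ⟨_, _, _, _, _, _, _, _,
    isEquitable_iterDeg AA k up fun x => hstab.extend_apply _ (Sum.inl x),
    isEquitable_iterDeg BB k up fun y => hstab.extend_apply _ (Sum.inr y),
    fun i => ?_, fun j => ?_⟩
  · rw [← count_map_univ, ← count_map_univ, hsepA]
  · rw [← count_map_univ, ← count_map_univ, hsepC]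

end IterDegToEquitable

theorem stmt0 [Fintype σ] {A B : Type} [Fintype A] [Fintype B]
    (AA : Struct σ ar A) (BB : Struct σ ar B) :
    FracIso AA BB ↔ SameIterDeg AA BB :=
  ⟨sameIterDeg_of_fracIso, fun h => fracIso_of_commonEquitable (commonEquitable_of_sameIterDeg h)⟩
end
end

section
/- Let 𝐀 and 𝐁 be graphs, i.e., σ-structures over a signature σ consisting of a single binary relation symbol E whose interpretations E(𝐀), E(𝐁) are symmetric and irreflexive. Then there exist doubly stochastic matrices X (rows indexed by B, columns by A) and Y (rows indexed by 𝒞_𝐁, columns by 𝒞_𝐀) such that X M_𝐀^ℓ = M_𝐁^ℓ Y and M_𝐀^ℓ Yᵀ = Xᵀ M_𝐁^ℓ for every label ℓ ∈ L, if and only if there exists a doubly stochastic matrix X' such that X' N_𝐀 = N_𝐁 X', where N_𝐀 and N_𝐁 denote the adjacency matrices of 𝐀 and 𝐁. -/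
attribute [local instance] Classical.propDecidable

set_option maxHeartbeats 1000000

noncomputable section

variable {σ : Type} {ar : σ → ℕ}

/-! The incidence matrices `P₀, P₁` (vertex `a` is the first, resp. second, endpoint of edge `c`)
carry all the information: `N = P₀ P₁ᵀ`, and for loopless graphs the label matrices are `P₀`,
`P₁`, `0` and `J - P₀ - P₁`. Hence a fractional isomorphism `(X, Y)` gives
`X N_A = P₀ Y P₁ᵀ = N_B X`.

Conversely, let `X` be doubly stochastic with `X N_A = N_B X`. Whenever `X u = w` and `Xᵀ w = u`,
the weighted variance `∑ X_ba (u_a - w_b)²` vanishes, so `u_a = w_b` on the support of `X`.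
Applied to `u = N_A 1_K`, `w = N_B 1_K` for a connected component `K` of the support graph of `X`,
this shows that these components form a common equitable partition of `A` and `B`. Colouring each
edge by the classes of its endpoints, the matrices averaging uniformly over the classes of vertices
and over those of edges are doubly stochastic and intertwine `P₀` and `P₁`, hence every label
matrix. -/

open Matrix

section BlockAverage

variable {α β γ δ : Type} {κ ι : Type*} [DecidableEq κ]

def classSize [Fintype α] (p : α → κ) (k : κ) : ℝ :=
  ∑ a, if p a = k then 1 else 0

def blockAvg [Fintype α] (pB : β → κ) (pA : α → κ) : Matrix β α ℝ :=
  fun b a => if pB b = pA a then (classSize pA (pA a))⁻¹ else 0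

/-- Matrix form of `IsEquitable`, with `R` and `S` in the roles of `cpar` and `dpar`. -/
def IsEquitableMatrix [Fintype α] [Fintype γ] [DecidableEq ι] (M : Matrix α γ ℝ) (p : α → κ)
    (q : γ → ι) (R : κ → ι → ℝ) (S : ι → κ → ℝ) : Prop :=
  (∀ a j, ∑ c, (if q c = j then M a c else 0) = R (p a) j) ∧
    (∀ c k, ∑ a, (if p a = k then M a c else 0) = S (q c) k)

lemma one_le_classSize [Fintype α] (p : α → κ) (a : α) : 1 ≤ classSize p (p a) := by
  unfold classSize
  calc (1 : ℝ) = if p a = p a then 1 else 0 := by simp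
    _ ≤ _ := Finset.single_le_sum (f := fun x => if p x = p a then (1 : ℝ) else 0)
        (fun x _ => by positivity) (Finset.mem_univ a)

lemma classSize_pos_of_eq [Fintype α] [Fintype β] {pA : α → κ} {pB : β → κ}
    (hp : ∀ k, classSize pA k = classSize pB k) (b : β) : 0 < classSize pA (pB b) :=
  (hp _).symm ▸ one_le_classSize pB b |>.trans_lt' one_pos

lemma sum_blockAvg_mul [Fintype α] (pB : β → κ) (pA : α → κ) (f : α → ℝ) (b : β) :
    ∑ a, blockAvg pB pA b a * f a
      = (classSize pA (pB b))⁻¹ * ∑ a, if pA a = pB b then f a else 0 := by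
  rw [Finset.mul_sum]
  refine Finset.sum_congr rfl fun a _ => ?_
  unfold blockAvg
  by_cases h : pB b = pA a
  · simp [h]
  · simp [h, Ne.symm h]

lemma blockAvg_transpose [Fintype α] [Fintype β] {pA : α → κ} {pB : β → κ}
    (hp : ∀ k, classSize pA k = classSize pB k) : (blockAvg pB pA)ᵀ = blockAvg pA pB := by
  ext a b
  simp only [transpose_apply, blockAvg]
  by_cases h : pB b = pA a
  · rw [if_pos h, if_pos h.symm, hp, h]
  · rw [if_neg h, if_neg (Ne.symm h)]

lemma sum_blockAvg [Fintype α] [Fintype β] {pA : α → κ} {pB : β → κ}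
    (hp : ∀ k, classSize pA k = classSize pB k) (b : β) : ∑ a, blockAvg pB pA b a = 1 := by
  simpa [classSize] using (sum_blockAvg_mul pB pA (fun _ => 1) b).trans
    (inv_mul_cancel₀ (classSize_pos_of_eq hp b).ne')

lemma isDoublyStochastic_blockAvg [Fintype α] [Fintype β] {pA : α → κ} {pB : β → κ}
    (hp : ∀ k, classSize pA k = classSize pB k) : IsDoublyStochastic (blockAvg pB pA) := by
  refine ⟨fun b a => ?_, sum_blockAvg hp, fun a => ?_⟩
  · unfold blockAvg
    split_ifs
    · exact inv_nonneg.2 (zero_le_one.trans (one_le_classSize pA a))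
    · exact le_rfl
  · rw [← sum_blockAvg (fun k => (hp k).symm) a, ← blockAvg_transpose hp]
    rfl

/-- Double counting the entries of `M` in the block `p⁻¹(k) × q⁻¹(j)`. -/
lemma IsEquitableMatrix.classSize_mul_eq [Fintype α] [Fintype γ] [DecidableEq ι]
    {M : Matrix α γ ℝ} {p : α → κ} {q : γ → ι} {R : κ → ι → ℝ} {S : ι → κ → ℝ}
    (hM : IsEquitableMatrix M p q R S) (k : κ) (j : ι) :
    classSize p k * R k j = classSize q j * S j k := by
  have hrow : ∑ a, ∑ c, (if p a = k ∧ q c = j then M a c else 0) = classSize p k * R k j := by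
    simp only [ite_and, Finset.sum_ite_irrel, Finset.sum_const_zero, hM.1, classSize,
      Finset.sum_mul]
    refine Finset.sum_congr rfl fun a _ => ?_
    split_ifs with h <;> simp [h]
  have hcol : ∑ c, ∑ a, (if p a = k ∧ q c = j then M a c else 0) = classSize q j * S j k := by
    simp only [and_comm (a := p _ = k), ite_and, Finset.sum_ite_irrel, Finset.sum_const_zero,
      hM.2, classSize, Finset.sum_mul]
    refine Finset.sum_congr rfl fun c _ => ?_
    split_ifs with h <;> simp [h]
  rw [← hrow, ← hcol, Finset.sum_comm]

lemma blockAvg_mul_eq_mul_blockAvg [Fintype α] [Fintype β] [Fintype γ] [Fintype δ]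
    [DecidableEq ι] {MA : Matrix α γ ℝ} {MB : Matrix β δ ℝ} {pA : α → κ} {qA : γ → ι}
    {pB : β → κ} {qB : δ → ι} {R : κ → ι → ℝ} {S : ι → κ → ℝ}
    (hA : IsEquitableMatrix MA pA qA R S) (hB : IsEquitableMatrix MB pB qB R S)
    (hp : ∀ k, classSize pA k = classSize pB k) :
    blockAvg pB pA * MA = MB * blockAvg qB qA := by
  ext b c
  have hn := (classSize_pos_of_eq hp b).ne'
  have hm := (zero_lt_one.trans_le (one_le_classSize qA c)).ne'
  have hdc := hA.classSize_mul_eq (pB b) (qA c)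
  have hMB : ∑ c', MB b c' * blockAvg qB qA c' c
      = (classSize qA (qA c))⁻¹ * R (pB b) (qA c) := by
    rw [← hB.1, Finset.mul_sum]
    refine Finset.sum_congr rfl fun c' _ => ?_
    unfold blockAvg
    split_ifs <;> simp [mul_comm]
  rw [mul_apply, sum_blockAvg_mul, hA.2, mul_apply, hMB]
  field_simp
  linarith

lemma mul_transpose_blockAvg_eq [Fintype α] [Fintype β] [Fintype γ] [Fintype δ]
    [DecidableEq ι] {MA : Matrix α γ ℝ} {MB : Matrix β δ ℝ} {pA : α → κ} {qA : γ → ι}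
    {pB : β → κ} {qB : δ → ι} {R : κ → ι → ℝ} {S : ι → κ → ℝ}
    (hA : IsEquitableMatrix MA pA qA R S) (hB : IsEquitableMatrix MB pB qB R S)
    (hp : ∀ k, classSize pA k = classSize pB k) (hq : ∀ j, classSize qA j = classSize qB j) :
    MA * (blockAvg qB qA)ᵀ = (blockAvg pB pA)ᵀ * MB := by
  rw [blockAvg_transpose hq, blockAvg_transpose hp]
  exact (blockAvg_mul_eq_mul_blockAvg hB hA fun k => (hp k).symm).symm

lemma IsEquitableMatrix.classSize_eq_sum [Fintype α] [Fintype γ] [DecidableEq ι]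
    {M : Matrix α γ ℝ} {p : α → κ} {q : γ → ι} {R : κ → ι → ℝ}
    {S : ι → κ → ℝ} (hM : IsEquitableMatrix M p q R S) (hcol : ∀ c, ∑ a, M a c = 1) (j : ι) :
    classSize q j = ∑ a, R (p a) j := by
  simp only [← hM.1, classSize]
  rw [Finset.sum_comm]
  refine Finset.sum_congr rfl fun c _ => ?_
  split_ifs
  · exact (hcol c).symm
  · simp

end BlockAverage

section SupportClasses

variable {A B : Type}

lemma IsDoublyStochastic.eq_of_mulVec_eq [Fintype A] [Fintype B] {X : Matrix B A ℝ}
    (hX : IsDoublyStochastic X) {u : A → ℝ} {w : B → ℝ} (hu : X *ᵥ u = w) (hw : Xᵀ *ᵥ w = u)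
    {a : A} {b : B} (hba : X b a ≠ 0) : u a = w b := by
  obtain ⟨hpos, hrow, hcol⟩ := hX
  have hu2 : ∑ b, ∑ a, X b a * u a ^ 2 = ∑ a, u a ^ 2 := by
    rw [Finset.sum_comm]
    simp only [← Finset.sum_mul, hcol, one_mul]
  have hw2 : ∑ b, ∑ a, X b a * w b ^ 2 = ∑ b, w b ^ 2 := by
    simp only [← Finset.sum_mul, hrow, one_mul]
  have hcross_w : ∑ b, ∑ a, X b a * u a * w b = ∑ b, w b ^ 2 := by
    simp only [← Finset.sum_mul, sq]
    exact Finset.sum_congr rfl fun b _ => congrArg (· * w b) (congrFun hu b)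
  have hcross_u : ∑ b, ∑ a, X b a * u a * w b = ∑ a, u a ^ 2 := by
    rw [Finset.sum_comm]
    simp only [mul_right_comm _ (u _), ← Finset.sum_mul, sq]
    exact Finset.sum_congr rfl fun a _ => congrArg (· * u a) (congrFun hw a)
  -- the weighted variance `∑ X b a (u a - w b)²` equals both `‖u‖² - ‖w‖²` and its negative
  have hT : ∑ b, ∑ a, X b a * (u a - w b) ^ 2 = 0 := by
    have : ∑ b, ∑ a, X b a * (u a - w b) ^ 2
        = ∑ b, ∑ a, X b a * u a ^ 2 + ∑ b, ∑ a, X b a * w b ^ 2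
          - 2 * ∑ b, ∑ a, X b a * u a * w b := by
      simp only [Finset.mul_sum, ← Finset.sum_add_distrib, ← Finset.sum_sub_distrib]
      exact Finset.sum_congr rfl fun b _ => Finset.sum_congr rfl fun a _ => by ring
    linarith
  have hnn : ∀ b a, 0 ≤ X b a * (u a - w b) ^ 2 := fun b a => mul_nonneg (hpos b a) (sq_nonneg _)
  have hterm := (Finset.sum_eq_zero_iff_of_nonneg fun a _ => hnn b a).1
    ((Finset.sum_eq_zero_iff_of_nonneg fun b _ => Finset.sum_nonneg fun a _ => hnn b a).1 hT b
      (Finset.mem_univ b)) a (Finset.mem_univ a)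
  exact sub_eq_zero.1 (pow_eq_zero_iff two_ne_zero |>.1 ((mul_eq_zero.1 hterm).resolve_left hba))

lemma sum_mul_eq_of_support [Fintype A] {x : A → ℝ} (hx : ∑ a, x a = 1) {u : A → ℝ} {v : ℝ}
    (h : ∀ a, x a ≠ 0 → u a = v) : ∑ a, x a * u a = v := by
  calc ∑ a, x a * u a = ∑ a, x a * v :=
        Finset.sum_congr rfl fun a _ => by
          by_cases ha : x a = 0
          · rw [ha, zero_mul, zero_mul]
          · rw [h a ha]
    _ = v := by rw [← Finset.sum_mul, hx, one_mul]

/-- The classes of `Quot (SupportRel X)` are the connected components of the bipartite support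
graph of `X`. -/
def SupportRel (X : Matrix B A ℝ) : A ⊕ B → A ⊕ B → Prop
  | .inl a, .inr b => X b a ≠ 0
  | _, _ => False

abbrev SupportClass (X : Matrix B A ℝ) : Type := Quot (SupportRel X)

def colClass (X : Matrix B A ℝ) (a : A) : SupportClass X := Quot.mk _ (.inl a)

def rowClass (X : Matrix B A ℝ) (b : B) : SupportClass X := Quot.mk _ (.inr b)

lemma colClass_eq_rowClass {X : Matrix B A ℝ} {a : A} {b : B} (h : X b a ≠ 0) :
    colClass X a = rowClass X b :=
  Quot.sound h

lemma mulVec_indicator_colClass [Fintype A] [Fintype B] {X : Matrix B A ℝ}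
    (hX : IsDoublyStochastic X) (k : SupportClass X) :
    X *ᵥ (fun a => if colClass X a = k then 1 else 0) =
      fun b => if rowClass X b = k then 1 else 0 :=
  funext fun b => sum_mul_eq_of_support (hX.2.1 b) fun _ h => by rw [colClass_eq_rowClass h]

lemma transpose_mulVec_indicator_rowClass [Fintype A] [Fintype B] {X : Matrix B A ℝ}
    (hX : IsDoublyStochastic X) (k : SupportClass X) :
    Xᵀ *ᵥ (fun b => if rowClass X b = k then 1 else 0) =
      fun a => if colClass X a = k then 1 else 0 :=
  funext fun a => sum_mul_eq_of_support (hX.2.2 a) fun _ h => by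
    rw [← colClass_eq_rowClass (X := X) h]

lemma sum_comp_colClass [Fintype A] [Fintype B] {X : Matrix B A ℝ} (hX : IsDoublyStochastic X)
    (F : SupportClass X → ℝ) : ∑ a, F (colClass X a) = ∑ b, F (rowClass X b) := by
  calc ∑ a, F (colClass X a) = ∑ a, ∑ b, X b a * F (colClass X a) := by
        simp only [← Finset.sum_mul, hX.2.2, one_mul]
    _ = ∑ b, F (rowClass X b) := by
        rw [Finset.sum_comm]
        exact Finset.sum_congr rfl fun b _ => sum_mul_eq_of_support (hX.2.1 b)
          fun _ h => by rw [colClass_eq_rowClass h]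

lemma classSize_colClass [Fintype A] [Fintype B] {X : Matrix B A ℝ} (hX : IsDoublyStochastic X)
    (k : SupportClass X) : classSize (colClass X) k = classSize (rowClass X) k :=
  sum_comp_colClass hX fun k' => if k' = k then 1 else 0

lemma exists_factor_of_mulVec_eq [Fintype A] [Fintype B] {X : Matrix B A ℝ}
    (hX : IsDoublyStochastic X) {u : A → ℝ} {w : B → ℝ} (hu : X *ᵥ u = w) (hw : Xᵀ *ᵥ w = u) :
    ∃ F : SupportClass X → ℝ, (∀ a, u a = F (colClass X a)) ∧ ∀ b, w b = F (rowClass X b) := by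
  refine ⟨Quot.lift (Sum.elim u w) ?_, fun _ => rfl, fun _ => rfl⟩
  rintro (a | b) (a' | b') h
  · exact h.elim
  · exact hX.eq_of_mulVec_eq hu hw h
  · exact h.elim
  · exact h.elim

lemma exists_classDegree [Fintype A] [Fintype B] {X : Matrix B A ℝ} (hX : IsDoublyStochastic X)
    {NA : Matrix A A ℝ} {NB : Matrix B B ℝ} (h : X * NA = NB * X) (hT : Xᵀ * NB = NA * Xᵀ) :
    ∃ D : SupportClass X → SupportClass X → ℝ,
      (∀ a k, (NA *ᵥ fun a' => if colClass X a' = k then 1 else 0) a = D (colClass X a) k) ∧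
      ∀ b k, (NB *ᵥ fun b' => if rowClass X b' = k then 1 else 0) b = D (rowClass X b) k := by
  have hfac : ∀ k, ∃ F : SupportClass X → ℝ,
      (∀ a, (NA *ᵥ fun a' => if colClass X a' = k then 1 else 0) a = F (colClass X a)) ∧
      ∀ b, (NB *ᵥ fun b' => if rowClass X b' = k then 1 else 0) b = F (rowClass X b) := by
    intro k
    refine exists_factor_of_mulVec_eq hX ?_ ?_
    · rw [mulVec_mulVec, h, ← mulVec_mulVec, mulVec_indicator_colClass hX]
    · rw [mulVec_mulVec, hT, ← mulVec_mulVec, transpose_mulVec_indicator_rowClass hX]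
  choose F hFA hFB using hfac
  exact ⟨fun k' k => F k k', fun a k => hFA k a, fun b k => hFB k b⟩

end SupportClasses

section Graph

variable {A B : Type}

def incMat (AA : Struct Unit (fun _ => 2) A) (i : Fin 2) : Matrix A (Cons AA) ℝ :=
  fun a c => if c.2.1 i = a then 1 else 0

lemma sum_cons_eq_sum_adjMat_mul [Fintype A] (AA : Struct Unit (fun _ => 2) A)
    (g : (Fin 2 → A) → ℝ) :
    ∑ c : Cons AA, g c.2.1 = ∑ x, ∑ y, adjMat AA x y * g ![x, y] := by
  let e : Cons AA ≃ {u // u ∈ AA.rel ()} := Equiv.uniqueSigma fun R => {u // u ∈ AA.rel R}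
  rw [Fintype.sum_equiv e (fun c => g c.2.1) (fun u => g u.1) (fun _ => rfl),
    ← Finset.sum_subtype (Finset.univ.filter (· ∈ AA.rel ())) (by simp) g, Finset.sum_filter,
    ← Fintype.sum_equiv (finTwoArrowEquiv A).symm
      (fun p => if ![p.1, p.2] ∈ AA.rel () then g ![p.1, p.2] else 0) _ (fun _ => rfl),
    Fintype.sum_prod_type]
  simp only [adjMat, ite_mul, one_mul, zero_mul]

lemma lab_eq_iff (AA : Struct Unit (fun _ => 2) A) (a : A) (c : Cons AA) (S : Finset (Fin 2)) :
    lab AA a c = ⟨(), S⟩ ↔ ∀ i, c.2.1 i = a ↔ i ∈ S := by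
  simp [lab, Finset.ext_iff]

lemma Cons.fst_ne_snd {AA : Struct Unit (fun _ => 2) A} (hirr : ∀ u ∈ AA.rel (), u 0 ≠ u 1)
    (c : Cons AA) : c.2.1 0 ≠ c.2.1 1 :=
  hirr _ c.2.2

lemma labMat_singleton {AA : Struct Unit (fun _ => 2) A} (hirr : ∀ u ∈ AA.rel (), u 0 ≠ u 1)
    (i : Fin 2) : labMat AA ⟨(), {i}⟩ = incMat AA i := by
  ext a c
  have := Cons.fst_ne_snd hirr c
  simp only [labMat, incMat, lab_eq_iff, Finset.mem_singleton, Fin.forall_fin_two]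
  by_cases h0 : c.2.1 0 = a <;> by_cases h1 : c.2.1 1 = a
  · exact absurd (h0.trans h1.symm) this
  all_goals fin_cases i <;> simp [h0, h1]

lemma labMat_univ {AA : Struct Unit (fun _ => 2) A} (hirr : ∀ u ∈ AA.rel (), u 0 ≠ u 1) :
    labMat AA ⟨(), Finset.univ⟩ = 0 := by
  ext a c
  have := Cons.fst_ne_snd hirr c
  simp only [labMat, lab_eq_iff, Finset.mem_univ, iff_true, Fin.forall_fin_two]
  exact if_neg fun h => this (h.1.trans h.2.symm)

lemma labMat_empty {AA : Struct Unit (fun _ => 2) A} (hirr : ∀ u ∈ AA.rel (), u 0 ≠ u 1) :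
    labMat AA ⟨(), ∅⟩ = of (fun _ _ => 1) - incMat AA 0 - incMat AA 1 := by
  ext a c
  have := Cons.fst_ne_snd hirr c
  simp only [labMat, incMat, lab_eq_iff, Finset.notMem_empty, iff_false, Fin.forall_fin_two,
    Matrix.sub_apply, of_apply]
  by_cases h0 : c.2.1 0 = a <;> by_cases h1 : c.2.1 1 = a
  · exact absurd (h0.trans h1.symm) this
  all_goals simp [h0, h1]

lemma adjMat_eq_incMat_mul_transpose [Fintype A] (AA : Struct Unit (fun _ => 2) A) :
    adjMat AA = incMat AA 0 * (incMat AA 1)ᵀ := by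
  ext a a'
  simp only [mul_apply, transpose_apply, incMat]
  rw [sum_cons_eq_sum_adjMat_mul AA fun u => (if u 0 = a then 1 else 0) * if u 1 = a' then 1 else 0,
    Finset.sum_eq_single a (fun x _ hx => by simp [hx]) (by simp),
    Finset.sum_eq_single a' (fun y _ hy => by simp [hy]) (by simp)]
  simp

lemma adjMat_transpose {AA : Struct Unit (fun _ => 2) A}
    (hsymm : ∀ u ∈ AA.rel (), (![u 1, u 0] : Fin 2 → A) ∈ AA.rel ()) :
    (adjMat AA)ᵀ = adjMat AA := by
  ext a a'
  have h := fun x y => hsymm ![x, y]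
  simp only [Matrix.cons_val_one, Matrix.cons_val_zero] at h
  simp only [transpose_apply, adjMat]
  exact if_congr ⟨h a' a, h a a'⟩ rfl rfl

def edgeClass {κ : Type*} {AA : Struct Unit (fun _ => 2) A} (p : A → κ) (c : Cons AA) : κ × κ :=
  (p (c.2.1 0), p (c.2.1 1))

lemma sum_incMat [Fintype A] (AA : Struct Unit (fun _ => 2) A) (i : Fin 2) (c : Cons AA) :
    ∑ a, incMat AA i a c = 1 := by
  simp [incMat]

lemma isEquitableMatrix_incMat_zero [Fintype A] {κ : Type*} [DecidableEq κ]
    {AA : Struct Unit (fun _ => 2) A} (p : A → κ) {D : κ → κ → ℝ}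
    (hD : ∀ a k, (adjMat AA *ᵥ fun a' => if p a' = k then 1 else 0) a = D (p a) k) :
    IsEquitableMatrix (incMat AA 0) p (edgeClass p)
      (fun k j => if j.1 = k then D k j.2 else 0) (fun j k => if j.1 = k then 1 else 0) := by
  refine ⟨fun a j => ?_, fun c k => ?_⟩
  · obtain ⟨j₁, j₂⟩ := j
    calc ∑ c, (if edgeClass p c = (j₁, j₂) then incMat AA 0 a c else 0)
        = ∑ x, ∑ y, adjMat AA x y *
            (if (p x, p y) = (j₁, j₂) then (if x = a then 1 else 0) else 0) :=
          sum_cons_eq_sum_adjMat_mul AA fun u =>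
            if (p (u 0), p (u 1)) = (j₁, j₂) then (if u 0 = a then 1 else 0) else 0
      _ = ∑ y, adjMat AA a y * (if p a = j₁ ∧ p y = j₂ then 1 else 0) := by
          rw [Finset.sum_eq_single a (fun x _ hx => by simp [hx]) (by simp)]
          simp
      _ = if j₁ = p a then D (p a) j₂ else 0 := by
          rw [← hD]
          by_cases h : j₁ = p a
          · simp [h, mulVec, dotProduct]
          · simp [h, Ne.symm h]
  · rw [Finset.sum_eq_single (c.2.1 0) (fun a _ ha => by simp [incMat, Ne.symm ha]) (by simp)]
    simp only [incMat]
    rfl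

lemma isEquitableMatrix_incMat_one [Fintype A] {κ : Type*} [DecidableEq κ]
    {AA : Struct Unit (fun _ => 2) A}
    (hsymm : ∀ u ∈ AA.rel (), (![u 1, u 0] : Fin 2 → A) ∈ AA.rel ()) (p : A → κ) {D : κ → κ → ℝ}
    (hD : ∀ a k, (adjMat AA *ᵥ fun a' => if p a' = k then 1 else 0) a = D (p a) k) :
    IsEquitableMatrix (incMat AA 1) p (edgeClass p)
      (fun k j => if j.2 = k then D k j.1 else 0) (fun j k => if j.2 = k then 1 else 0) := by
  refine ⟨fun a j => ?_, fun c k => ?_⟩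
  · obtain ⟨j₁, j₂⟩ := j
    calc ∑ c, (if edgeClass p c = (j₁, j₂) then incMat AA 1 a c else 0)
        = ∑ x, ∑ y, adjMat AA x y *
            (if (p x, p y) = (j₁, j₂) then (if y = a then 1 else 0) else 0) :=
          sum_cons_eq_sum_adjMat_mul AA fun u =>
            if (p (u 0), p (u 1)) = (j₁, j₂) then (if u 1 = a then 1 else 0) else 0
      _ = ∑ x, adjMat AA a x * (if p x = j₁ ∧ p a = j₂ then 1 else 0) := by
          refine Finset.sum_congr rfl fun x _ => ?_
          rw [Finset.sum_eq_single a (fun y _ hy => by simp [hy]) (by simp),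
            ← congrFun (congrFun (adjMat_transpose hsymm) a) x]
          simp
      _ = if j₂ = p a then D (p a) j₁ else 0 := by
          rw [← hD]
          by_cases h : j₂ = p a
          · simp [h, mulVec, dotProduct]
          · simp [h, Ne.symm h]
  · rw [Finset.sum_eq_single (c.2.1 1) (fun a _ ha => by simp [incMat, Ne.symm ha]) (by simp)]
    simp only [incMat]
    rfl

lemma fracIso_of_incMat [Fintype A] [Fintype B] {AA : Struct Unit (fun _ => 2) A}
    {BB : Struct Unit (fun _ => 2) B} (hAirr : ∀ u ∈ AA.rel (), u 0 ≠ u 1)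
    (hBirr : ∀ u ∈ BB.rel (), u 0 ≠ u 1) {X : Matrix B A ℝ} {Y : Matrix (Cons BB) (Cons AA) ℝ}
    (hX : IsDoublyStochastic X) (hY : IsDoublyStochastic Y)
    (h : ∀ i, X * incMat AA i = incMat BB i * Y ∧ incMat AA i * Yᵀ = Xᵀ * incMat BB i) :
    FracIso AA BB := by
  have hJ : X * (of fun _ _ => 1 : Matrix A (Cons AA) ℝ)
        = (of fun _ _ => 1 : Matrix B (Cons BB) ℝ) * Y ∧
      (of fun _ _ => 1 : Matrix A (Cons AA) ℝ) * Yᵀ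
        = Xᵀ * (of fun _ _ => 1 : Matrix B (Cons BB) ℝ) := by
    constructor <;> ext <;> simp [mul_apply, hX.2.1, hX.2.2, hY.2.1, hY.2.2]
  refine ⟨X, Y, hX, hY, fun ⟨(), S⟩ => ?_⟩
  obtain rfl | rfl | rfl | rfl : S = ∅ ∨ S = {0} ∨ S = {1} ∨ S = Finset.univ := by
    revert S; decide
  · simp only [labMat_empty hAirr, labMat_empty hBirr, Matrix.mul_sub, Matrix.sub_mul, hJ.1, hJ.2,
      (h 0).1, (h 0).2, (h 1).1, (h 1).2, and_self]
  · simpa only [labMat_singleton hAirr, labMat_singleton hBirr] using h 0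
  · simpa only [labMat_singleton hAirr, labMat_singleton hBirr] using h 1
  · simp [labMat_univ hAirr, labMat_univ hBirr]

lemma mul_adjMat_eq_of_fracIso [Fintype A] [Fintype B] {AA : Struct Unit (fun _ => 2) A}
    {BB : Struct Unit (fun _ => 2) B} (hAirr : ∀ u ∈ AA.rel (), u 0 ≠ u 1)
    (hBirr : ∀ u ∈ BB.rel (), u 0 ≠ u 1) {X : Matrix B A ℝ} {Y : Matrix (Cons BB) (Cons AA) ℝ}
    (h : ∀ ℓ, X * labMat AA ℓ = labMat BB ℓ * Y ∧ labMat AA ℓ * Yᵀ = Xᵀ * labMat BB ℓ) :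
    X * adjMat AA = adjMat BB * X := by
  have h₀ := (h ⟨(), {0}⟩).1
  have h₁ := (h ⟨(), {1}⟩).2
  rw [labMat_singleton hAirr, labMat_singleton hBirr] at h₀ h₁
  calc X * adjMat AA = X * incMat AA 0 * (incMat AA 1)ᵀ := by
        rw [adjMat_eq_incMat_mul_transpose, Matrix.mul_assoc]
    _ = incMat BB 0 * (incMat AA 1 * Yᵀ)ᵀ := by
        rw [h₀, transpose_mul, transpose_transpose, Matrix.mul_assoc]
    _ = adjMat BB * X := by
        rw [h₁, transpose_mul, transpose_transpose, ← Matrix.mul_assoc,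
          adjMat_eq_incMat_mul_transpose]

lemma fracIso_of_mul_adjMat_eq [Fintype A] [Fintype B] {AA : Struct Unit (fun _ => 2) A}
    {BB : Struct Unit (fun _ => 2) B}
    (hAsymm : ∀ u ∈ AA.rel (), (![u 1, u 0] : Fin 2 → A) ∈ AA.rel ())
    (hAirr : ∀ u ∈ AA.rel (), u 0 ≠ u 1)
    (hBsymm : ∀ u ∈ BB.rel (), (![u 1, u 0] : Fin 2 → B) ∈ BB.rel ())
    (hBirr : ∀ u ∈ BB.rel (), u 0 ≠ u 1) {X : Matrix B A ℝ} (hX : IsDoublyStochastic X)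
    (h : X * adjMat AA = adjMat BB * X) : FracIso AA BB := by
  have hT : Xᵀ * adjMat BB = adjMat AA * Xᵀ := by
    rw [← adjMat_transpose hAsymm, ← adjMat_transpose hBsymm, ← transpose_mul, ← h,
      transpose_mul]
  obtain ⟨D, hDA, hDB⟩ := exists_classDegree hX h hT
  have hp := classSize_colClass hX
  have h₀A := isEquitableMatrix_incMat_zero (colClass X) hDA
  have h₀B := isEquitableMatrix_incMat_zero (rowClass X) hDB
  have h₁A := isEquitableMatrix_incMat_one hAsymm (colClass X) hDA
  have h₁B := isEquitableMatrix_incMat_one hBsymm (rowClass X) hDB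
  have hq : ∀ j, classSize (edgeClass (AA := AA) (colClass X)) j
      = classSize (edgeClass (AA := BB) (rowClass X)) j := fun j => by
    rw [h₀A.classSize_eq_sum (sum_incMat AA 0), h₀B.classSize_eq_sum (sum_incMat BB 0)]
    exact sum_comp_colClass hX fun k => if j.1 = k then D k j.2 else 0
  refine fracIso_of_incMat hAirr hBirr (isDoublyStochastic_blockAvg hp)
    (isDoublyStochastic_blockAvg hq) fun i => ?_
  fin_cases i
  · exact ⟨blockAvg_mul_eq_mul_blockAvg h₀A h₀B hp, mul_transpose_blockAvg_eq h₀A h₀B hp hq⟩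
  · exact ⟨blockAvg_mul_eq_mul_blockAvg h₁A h₁B hp, mul_transpose_blockAvg_eq h₁A h₁B hp hq⟩

end Graph

theorem stmt3 {A B : Type} [Fintype A] [Fintype B]
    (AA : Struct Unit (fun _ => 2) A) (BB : Struct Unit (fun _ => 2) B)
    (hAsymm : ∀ u ∈ AA.rel (), (![u 1, u 0] : Fin 2 → A) ∈ AA.rel ())
    (hAirr : ∀ u ∈ AA.rel (), u 0 ≠ u 1)
    (hBsymm : ∀ u ∈ BB.rel (), (![u 1, u 0] : Fin 2 → B) ∈ BB.rel ())
    (hBirr : ∀ u ∈ BB.rel (), u 0 ≠ u 1) :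
    FracIso AA BB ↔
      ∃ X' : Matrix B A ℝ, IsDoublyStochastic X' ∧
        X' * adjMat AA = adjMat BB * X' := by
  constructor
  · rintro ⟨X, Y, hX, -, h⟩
    exact ⟨X, hX, mul_adjMat_eq_of_fracIso hAirr hBirr h⟩
  · rintro ⟨X, hX, h⟩
    exact fracIso_of_mul_adjMat_eq hAsymm hAirr hBsymm hBirr hX h

end
end

section
/- Let V and W be finite index sets, let X ∈ ℝ^{V×V} and Y ∈ ℝ^{W×W} be doubly stochastic indecomposable matrices, and let M₁, M₂ ∈ ℝ^{V×W} satisfy X M₁ = M₂ Y and M₁ Yᵀ = Xᵀ M₂. Then there exist real numbers c and d such that M₁·𝟏 = M₂·𝟏 = c·𝟏 and 𝟏ᵀ M₁ = 𝟏ᵀ M₂ = d·𝟏ᵀ, i.e., all row sums of M₁ and M₂ equal c and all column sums of M₁ and M₂ equal d. -/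
attribute [local instance] Classical.propDecidable

set_option maxHeartbeats 1000000

noncomputable section

variable {σ : Type} {ar : σ → ℕ}

/-!
The row sums `u = M₁ 𝟏`, `r = M₂ 𝟏` satisfy `X u = r` and `Xᵀ r = u`, and the column sums
satisfy the same relations with `Y`. For a doubly stochastic `Z` with `Z u = r` and `Zᵀ r = u`,
the cross term of `∑_{v,w} Z v w (u w - r v)²` equals both `∑ r²` and `∑ u²`, so this sum of
non-negative terms is `∑ u² - ∑ r² = ∑ r² - ∑ u² = 0`. Hence `r v = u w` wherever `Z v w ≠ 0`,
and indecomposability of `Z` spreads this equality to a single constant.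
-/

lemma eq_of_not_mDecomposable {V W α : Type} {M : Matrix V W ℝ} (hM : ¬ MDecomposable M)
    {g : V → α} {f : W → α} (hgf : ∀ v w, M v w ≠ 0 → g v = f w) {c : α}
    (hc : (∃ v, g v = c) ∨ ∃ w, f w = c) : (∀ v, g v = c) ∧ ∀ w, f w = c := by
  by_contra hne
  refine hM ⟨{v | g v = c}, {w | f w = c}, hc, ?_, ?_⟩
  · simpa only [not_and_or, not_forall, Set.Nonempty, Set.mem_compl_iff, Set.mem_ofPred_eq]
      using hne
  · rintro v w (⟨hv, hw⟩ | ⟨hv, hw⟩) <;> by_contra hvw <;> simp_all [hgf v w hvw]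

lemma exists_const_of_not_mDecomposable {V W α : Type} [Nonempty α] {M : Matrix V W ℝ}
    (hM : ¬ MDecomposable M) {g : V → α} {f : W → α}
    (hgf : ∀ v w, M v w ≠ 0 → g v = f w) : ∃ c, (∀ v, g v = c) ∧ ∀ w, f w = c := by
  rcases isEmpty_or_nonempty V with hV | ⟨⟨v₀⟩⟩
  · rcases isEmpty_or_nonempty W with hW | ⟨⟨w₀⟩⟩
    · exact ⟨Classical.arbitrary α, fun v => isEmptyElim v, fun w => isEmptyElim w⟩
    · exact ⟨f w₀, eq_of_not_mDecomposable hM hgf (.inr ⟨w₀, rfl⟩)⟩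
  · exact ⟨g v₀, eq_of_not_mDecomposable hM hgf (.inl ⟨v₀, rfl⟩)⟩

open Matrix

section DoublyStochastic

variable {V W : Type} [Fintype V] [Fintype W] {Z : Matrix V W ℝ}

lemma IsDoublyStochastic.mulVec_one (hZ : IsDoublyStochastic Z) : Z *ᵥ 1 = 1 := by
  ext v
  simpa [mulVec, dotProduct] using hZ.2.1 v

lemma IsDoublyStochastic.one_vecMul (hZ : IsDoublyStochastic Z) : 1 ᵥ* Z = 1 := by
  ext w
  simpa [vecMul, dotProduct] using hZ.2.2 w

lemma sum_mul_sq_sub_eq_zero_of_mulVec_eq_of_vecMul_eq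
    (hrow : ∀ v, ∑ w, Z v w = 1) (hcol : ∀ w, ∑ v, Z v w = 1) {u : W → ℝ} {r : V → ℝ}
    (hu : Z *ᵥ u = r) (hr : r ᵥ* Z = u) :
    ∑ v, ∑ w, Z v w * (u w - r v) ^ 2 = 0 := by
  have hrr : ∑ v, ∑ w, Z v w * r v ^ 2 = ∑ v, r v ^ 2 := by
    simp only [← Finset.sum_mul, hrow, one_mul]
  have huu : ∑ v, ∑ w, Z v w * u w ^ 2 = ∑ w, u w ^ 2 := by
    rw [Finset.sum_comm]
    simp only [← Finset.sum_mul, hcol, one_mul]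
  have hur_r : ∑ v, ∑ w, Z v w * (u w * r v) = ∑ v, r v ^ 2 := by
    refine Finset.sum_congr rfl fun v _ => ?_
    simp only [← mul_assoc, ← Finset.sum_mul]
    rw [← congrFun hu v]
    simp [mulVec, dotProduct, sq]
  have hur_u : ∑ v, ∑ w, Z v w * (u w * r v) = ∑ w, u w ^ 2 := by
    rw [Finset.sum_comm]
    refine Finset.sum_congr rfl fun w _ => ?_
    simp only [mul_left_comm _ (u w), ← Finset.mul_sum]
    rw [← congrFun hr w]
    simp [vecMul, dotProduct, sq, mul_comm]
  calc ∑ v, ∑ w, Z v w * (u w - r v) ^ 2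
      = ∑ v, ∑ w, Z v w * u w ^ 2 - 2 * ∑ v, ∑ w, Z v w * (u w * r v)
          + ∑ v, ∑ w, Z v w * r v ^ 2 := by
        simp only [Finset.mul_sum, ← Finset.sum_sub_distrib, ← Finset.sum_add_distrib]
        refine Finset.sum_congr rfl fun v _ => Finset.sum_congr rfl fun w _ => ?_
        ring
    _ = 0 := by linarith

lemma IsDoublyStochastic.eq_of_mulVec_eq_of_vecMul_eq (hZ : IsDoublyStochastic Z)
    {u : W → ℝ} {r : V → ℝ} (hu : Z *ᵥ u = r) (hr : r ᵥ* Z = u) (v : V) (w : W)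
    (hvw : Z v w ≠ 0) : r v = u w := by
  have hsum := sum_mul_sq_sub_eq_zero_of_mulVec_eq_of_vecMul_eq hZ.2.1 hZ.2.2 hu hr
  have hnonneg : ∀ v w, 0 ≤ Z v w * (u w - r v) ^ 2 := fun v w =>
    mul_nonneg (hZ.1 v w) (sq_nonneg _)
  rw [Finset.sum_eq_zero_iff_of_nonneg fun v _ => Finset.sum_nonneg fun w _ => hnonneg v w]
    at hsum
  have hterm := (Finset.sum_eq_zero_iff_of_nonneg fun w _ => hnonneg v w).1
    (hsum v (Finset.mem_univ v)) w (Finset.mem_univ w)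
  have := pow_eq_zero_iff two_ne_zero |>.1 ((mul_eq_zero.1 hterm).resolve_left hvw)
  linarith

lemma IsDoublyStochastic.exists_const_of_mulVec_eq_of_vecMul_eq (hZ : IsDoublyStochastic Z)
    (hind : ¬ MDecomposable Z) {u : W → ℝ} {r : V → ℝ} (hu : Z *ᵥ u = r) (hr : r ᵥ* Z = u) :
    ∃ c, (∀ v, r v = c) ∧ ∀ w, u w = c :=
  exists_const_of_not_mDecomposable hind (hZ.eq_of_mulVec_eq_of_vecMul_eq hu hr)

end DoublyStochastic

theorem stmt12 {V W : Type} [Fintype V] [Fintype W]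
    (X : Matrix V V ℝ) (Y : Matrix W W ℝ) (M₁ M₂ : Matrix V W ℝ)
    (hX : IsDoublyStochastic X) (hY : IsDoublyStochastic Y)
    (hXind : ¬ MDecomposable X) (hYind : ¬ MDecomposable Y)
    (h1 : X * M₁ = M₂ * Y) (h2 : M₁ * Y.transpose = X.transpose * M₂) :
    ∃ c d : ℝ, (∀ v, ∑ w, M₁ v w = c) ∧ (∀ v, ∑ w, M₂ v w = c) ∧
      (∀ w, ∑ v, M₁ v w = d) ∧ (∀ w, ∑ v, M₂ v w = d) := by
  have hrow₁ : X *ᵥ (M₁ *ᵥ 1) = M₂ *ᵥ 1 := by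
    rw [mulVec_mulVec, h1, ← mulVec_mulVec, hY.mulVec_one]
  have hrow₂ : (M₂ *ᵥ 1) ᵥ* X = M₁ *ᵥ 1 := by
    rw [← mulVec_transpose, mulVec_mulVec, ← h2, ← mulVec_mulVec,
      mulVec_transpose, hY.one_vecMul]
  have hcol₁ : Y *ᵥ (1 ᵥ* M₁) = 1 ᵥ* M₂ := by
    rw [← vecMul_transpose, vecMul_vecMul, h2, ← vecMul_vecMul,
      vecMul_transpose, hX.mulVec_one]
  have hcol₂ : (1 ᵥ* M₂) ᵥ* Y = 1 ᵥ* M₁ := by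
    rw [vecMul_vecMul, ← h1, ← vecMul_vecMul, hX.one_vecMul]
  obtain ⟨c, hc₂, hc₁⟩ := hX.exists_const_of_mulVec_eq_of_vecMul_eq hXind hrow₁ hrow₂
  obtain ⟨d, hd₂, hd₁⟩ := hY.exists_const_of_mulVec_eq_of_vecMul_eq hYind hcol₁ hcol₂
  refine ⟨c, d, fun v => ?_, fun v => ?_, fun w => ?_, fun w => ?_⟩
  · simpa [mulVec, dotProduct] using hc₁ v
  · simpa [mulVec, dotProduct] using hc₂ v
  · simpa [vecMul, dotProduct] using hd₁ w
  · simpa [vecMul, dotProduct] using hd₂ w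

end
end
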